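/- Combining the q-update estimate with the dual bound: if u⁺ = ν(q⁺ − f(z⁺)), u = ν(q − f(z)), f is S-Lipschitz, ρ > 0, then (ν/2)‖f(z⁺) − q‖² − (ν/2)‖f(z⁺) − q⁺‖² − ⟨u⁺, q − q⁺⟩ + (ρ/2)‖q⁺ − q‖² − (1/ρ)‖u⁺ − u‖² ≥ (ρ/2 − 2ν²/ρ − ν/2)‖q⁺ − q‖² − (2ν²S²/ρ)‖z⁺ − z‖². -/
import Mathlib


open scoped RealInnerProductSpace

theorem stmt_13 {n : ℕ} (ν ρ S : ℝ) (hν : 0 < ν) (hρ : 0 < ρ) (hS : 0 ≤ S)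
    (f : EuclideanSpace ℝ (Fin n) → EuclideanSpace ℝ (Fin n))
    (hf : ∀ x y, ‖f x - f y‖ ≤ S * ‖x - y‖)
    (z zplus q qplus u uplus : EuclideanSpace ℝ (Fin n))
    (hu : u = ν • (q - f z)) (hup : uplus = ν • (qplus - f zplus)) :
    ν / 2 * ‖f zplus - q‖ ^ 2 - ν / 2 * ‖f zplus - qplus‖ ^ 2 -
        ⟪uplus, q - qplus⟫ + ρ / 2 * ‖qplus - q‖ ^ 2 - (1 / ρ) * ‖uplus - u‖ ^ 2 ≥
      (ρ / 2 - 2 * ν ^ 2 / ρ - ν / 2) * ‖qplus - q‖ ^ 2 -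
        (2 * ν ^ 2 * S ^ 2 / ρ) * ‖zplus - z‖ ^ 2 := by
  have e1 : ⟪uplus, q - qplus⟫ = ν * ⟪qplus - f zplus, q - qplus⟫ := by
    rw [hup, real_inner_smul_left]
  have e2 : ‖f zplus - q‖ ^ 2
      = ‖f zplus - qplus‖ ^ 2 + 2 * ⟪f zplus - qplus, qplus - q⟫ + ‖qplus - q‖ ^ 2 := by
    have h : f zplus - q = (f zplus - qplus) + (qplus - q) := by abel
    rw [h, norm_add_sq_real]
  have e3 : ⟪qplus - f zplus, q - qplus⟫ = ⟪f zplus - qplus, qplus - q⟫ := by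
    rw [show qplus - f zplus = -(f zplus - qplus) from by abel,
      show q - qplus = -(qplus - q) from by abel, inner_neg_neg]
  -- bound on ‖uplus - u‖
  have hdiff : uplus - u = ν • ((qplus - q) - (f zplus - f z)) := by
    rw [hup, hu, smul_sub]; module
  have hnorm : ‖uplus - u‖ ≤ ν * (‖qplus - q‖ + S * ‖zplus - z‖) := by
    rw [hdiff, norm_smul, Real.norm_eq_abs, abs_of_pos hν]
    have := norm_sub_le (qplus - q) (f zplus - f z)
    have := hf zplus z
    nlinarith [hν.le]
  have hsq : ‖uplus - u‖ ^ 2 ≤ 2 * ν ^ 2 * ‖qplus - q‖ ^ 2 + 2 * ν ^ 2 * S ^ 2 * ‖zplus - z‖ ^ 2 := by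
    have h0 : 0 ≤ ‖uplus - u‖ := norm_nonneg _
    nlinarith [norm_nonneg (qplus - q), norm_nonneg (zplus - z), mul_nonneg hS (norm_nonneg (zplus - z)), sq_nonneg (‖qplus - q‖ - S * ‖zplus - z‖), mul_nonneg hν.le (norm_nonneg (qplus - q))]
  have hρ' : 0 < (1 : ℝ) / ρ := by positivity
  have hq2 : 0 ≤ ‖qplus - q‖ ^ 2 := sq_nonneg _
  rw [e1, e3, e2]
  have : (1 / ρ) * ‖uplus - u‖ ^ 2 ≤ (1 / ρ) * (2 * ν ^ 2 * ‖qplus - q‖ ^ 2 + 2 * ν ^ 2 * S ^ 2 * ‖zplus - z‖ ^ 2) :=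
    mul_le_mul_of_nonneg_left hsq hρ'.le
  have hr : 1 / ρ * (2 * ν ^ 2 * ‖qplus - q‖ ^ 2 + 2 * ν ^ 2 * S ^ 2 * ‖zplus - z‖ ^ 2)
      = 2 * ν ^ 2 / ρ * ‖qplus - q‖ ^ 2 + 2 * ν ^ 2 * S ^ 2 / ρ * ‖zplus - z‖ ^ 2 := by ring
  rw [hr] at this
  have hvq : 0 ≤ ν * ‖qplus - q‖ ^ 2 := mul_nonneg hν.le hq2
  linarith
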